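/- arXiv:2401.11717 — 2 statements merged into one kernel-verified Lean document; each statement's English description precedes it below -/
import Mathlib

section
/- Inversion formula for weighted graph sums over an abstract contraction poset: Let P be a finite poset with greatest element ⊤ and edge-contraction data (E(x), C(x,y)) and automorphism weights a : P → ℚ_{>0} as above, with C(x,⊤) a singleton for each x. Suppose f̃ : P → K is any function into a commutative ring K, and define g̃(x) = ∑_{y ≤ x} f̃(y)·(a(x)/a(y))·|C(y,x)|. Then f̃(⊤) = ∑_{y ∈ P} (-1)^{|E(y)|}·(a(⊤)/a(y))·g̃(y). -/
/-- Realization of the generalized Möbius inversion at the top element of an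
edge-contraction poset: if `g̃ x = ∑_{y ≤ x} (a x / a y)·|C y x| • f̃ y`, then
`f̃ ⊤ = ∑_y (-1)^{|E y|}·(a ⊤ / a y) • g̃ y`. -/
theorem graph_sum_inversion_at_top
    {P : Type*} [Fintype P] [PartialOrder P] [OrderTop P] [DecidableEq P]
    [DecidableRel ((· ≤ ·) : P → P → Prop)] [LocallyFiniteOrder P]
    {α : Type*} [DecidableEq α]
    (E : P → Finset α) (C : P → P → Finset (Finset α))
    (hEtop : E ⊤ = ∅)
    (hsub : ∀ x y S, S ∈ C x y → S ⊆ E x)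
    (hpart : ∀ x : P, ∀ S : Finset α, S ⊆ E x → ∃! y : P, x ≤ y ∧ S ∈ C x y)
    (hcard : ∀ x y S, x ≤ y → S ∈ C x y → (E y).card = (E x).card - S.card)
    (hCdiag : ∀ x : P, C x x = {∅})
    (hCtop : ∀ x : P, (C x ⊤).card = 1)
    (a : P → ℚ) (ha : ∀ x, 0 < a x)
    {K : Type*} [CommRing K] [Algebra ℚ K]
    (f g : P → K)
    (hg : ∀ x, g x = ∑ y ∈ Finset.univ.filter (· ≤ x),
        ((a x / a y) * ((C y x).card : ℚ)) • f y) :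
    f ⊤ = ∑ y : P, ((-1 : ℚ) ^ (E y).card * (a ⊤ / a y)) • g y := by
  classical
  -- if E z = ∅ then z = ⊤
  have htop : ∀ z : P, E z = ∅ → z = ⊤ := by
    intro z hz
    obtain ⟨S, hS⟩ := Finset.card_pos.mp (by rw [hCtop z]; norm_num)
    have hS0 : S = ∅ := Finset.subset_empty.mp (hz ▸ hsub z ⊤ S hS)
    obtain ⟨y, hy, huniq⟩ := hpart z ∅ (by simp)
    have h1 : z = y := huniq z ⟨le_rfl, by simp [hCdiag]⟩
    have h2 : (⊤ : P) = y := huniq ⊤ ⟨le_top, hS0 ▸ hS⟩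
    rw [h1, ← h2]
  -- key combinatorial identity
  have key : ∀ z : P, (∑ y ∈ Finset.univ.filter (z ≤ ·),
      (-1 : ℚ) ^ (E y).card * ((C z y).card : ℚ)) = if z = ⊤ then 1 else 0 := by
    intro z
    have hbij : (Finset.univ.filter (z ≤ ·)).biUnion (fun y => C z y) = (E z).powerset := by
      ext S
      simp only [Finset.mem_biUnion, Finset.mem_filter, Finset.mem_univ, true_and,
        Finset.mem_powerset]
      constructor
      · rintro ⟨y, _, hS⟩; exact hsub z y S hS
      · intro hS
        obtain ⟨y, ⟨hy1, hy2⟩, -⟩ := hpart z S hS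
        exact ⟨y, hy1, hy2⟩
    have hdisj : Set.PairwiseDisjoint (↑(Finset.univ.filter (z ≤ ·))) (fun y => C z y) := by
      intro y₁ h1 y₂ h2 hne
      simp only [Finset.coe_filter, Set.mem_setOf_eq] at h1 h2
      rw [Function.onFun, Finset.disjoint_left]
      intro S hS1 hS2
      obtain ⟨y, hy, huniq⟩ := hpart z S (hsub z y₁ S hS1)
      exact hne ((huniq y₁ ⟨h1.2, hS1⟩).trans (huniq y₂ ⟨h2.2, hS2⟩).symm)
    have h1 : (∑ y ∈ Finset.univ.filter (z ≤ ·),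
        (-1 : ℚ) ^ (E y).card * ((C z y).card : ℚ))
        = ∑ S ∈ (E z).powerset, (-1 : ℚ) ^ ((E z).card - S.card) := by
      rw [← hbij, Finset.sum_biUnion hdisj]
      refine Finset.sum_congr rfl fun y hy => ?_
      simp only [Finset.mem_filter, Finset.mem_univ, true_and] at hy
      rw [Finset.sum_congr rfl fun S hS => by rw [← hcard z y S hy hS],
        Finset.sum_const, nsmul_eq_mul, mul_comm]
    rw [h1]
    have h2 : ∀ S ∈ (E z).powerset, (-1 : ℚ) ^ ((E z).card - S.card)
        = (-1 : ℚ) ^ (E z).card * (-1 : ℚ) ^ S.card := by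
      intro S hS
      have hle : S.card ≤ (E z).card :=
        Finset.card_le_card (Finset.mem_powerset.mp hS)
      have : (-1 : ℚ) ^ ((E z).card - S.card) * (-1 : ℚ) ^ S.card = (-1 : ℚ) ^ (E z).card := by
        rw [← pow_add, Nat.sub_add_cancel hle]
      calc (-1 : ℚ) ^ ((E z).card - S.card)
          = (-1 : ℚ) ^ ((E z).card - S.card) * ((-1 : ℚ) ^ S.card * (-1 : ℚ) ^ S.card) := by
            rw [← pow_add, ← two_mul, pow_mul]; norm_num
        _ = (-1 : ℚ) ^ (E z).card * (-1 : ℚ) ^ S.card := by rw [← mul_assoc, this]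
    rw [Finset.sum_congr rfl h2, ← Finset.mul_sum]
    have h3 : (∑ S ∈ (E z).powerset, (-1 : ℚ) ^ S.card)
        = if E z = ∅ then 1 else 0 := by
      have := Finset.sum_powerset_neg_one_pow_card (x := E z)
      have := congrArg (fun n : ℤ => (n : ℚ)) this
      push_cast at this
      simpa using this
    rw [h3]
    by_cases hz : z = ⊤
    · subst hz; simp [hEtop]
    · have : E z ≠ ∅ := fun h => hz (htop z h)
      simp [this, hz]
  -- now the main computation
  rw [show (∑ y : P, ((-1 : ℚ) ^ (E y).card * (a ⊤ / a y)) • g y)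
      = ∑ y : P, ∑ z : P, (if z ≤ y then
          (((-1 : ℚ) ^ (E y).card * (a ⊤ / a y)) * ((a y / a z) * ((C z y).card : ℚ))) • f z
        else 0) from Finset.sum_congr rfl fun y _ => by
      rw [hg y, Finset.smul_sum, ← Finset.sum_filter]
      exact Finset.sum_congr rfl fun z _ => (smul_smul _ _ _)]
  rw [Finset.sum_comm]
  have hcoef : ∀ z : P, (∑ y : P, if z ≤ y then
      (((-1 : ℚ) ^ (E y).card * (a ⊤ / a y)) * ((a y / a z) * ((C z y).card : ℚ))) • f z
      else 0) = (if z = ⊤ then (1 : ℚ) else 0) • f z := by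
    intro z
    have : ∀ y : P, z ≤ y →
        ((-1 : ℚ) ^ (E y).card * (a ⊤ / a y)) * ((a y / a z) * ((C z y).card : ℚ))
        = (a ⊤ / a z) * ((-1 : ℚ) ^ (E y).card * ((C z y).card : ℚ)) := by
      intro y _
      rw [show ((-1 : ℚ) ^ (E y).card * (a ⊤ / a y)) * ((a y / a z) * ((C z y).card : ℚ))
          = (a ⊤ / a y * (a y / a z)) * ((-1 : ℚ) ^ (E y).card * ((C z y).card : ℚ)) from by
        ring, div_mul_div_cancel₀ (ha y).ne']
    calc (∑ y : P, if z ≤ y then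
          (((-1 : ℚ) ^ (E y).card * (a ⊤ / a y)) * ((a y / a z) * ((C z y).card : ℚ))) • f z
          else 0)
        = ∑ y ∈ Finset.univ.filter (z ≤ ·),
            ((a ⊤ / a z) * ((-1 : ℚ) ^ (E y).card * ((C z y).card : ℚ))) • f z := by
          rw [Finset.sum_filter]
          refine Finset.sum_congr rfl fun y _ => ?_
          split_ifs with h
          · rw [this y h]
          · rfl
      _ = ((a ⊤ / a z) * ∑ y ∈ Finset.univ.filter (z ≤ ·),
            (-1 : ℚ) ^ (E y).card * ((C z y).card : ℚ)) • f z := by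
          rw [← Finset.sum_smul, ← Finset.mul_sum]
      _ = (if z = ⊤ then (1 : ℚ) else 0) • f z := by
          rw [key z]
          split_ifs with h
          · subst h; rw [mul_one, div_self (ha ⊤).ne']
          · rw [mul_zero]
  rw [Finset.sum_congr rfl fun z _ => hcoef z]
  simp
end

section
/- For a finite poset P with greatest element ⊤ carrying edge-contraction data (E, C) and weights a as before, define ĝ(x) = ∑_{y ≤ x} (a(x)/a(y))·|C(y,x)|·e_y in the free ℚ-vector space on P. Then ∑_{x ∈ P} ((-1)^{|E(x)|}/a(x))·ĝ(x) = (1/a(⊤))·e_⊤. -/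
/-- Equation (eq-pf-hat-g): for an edge-contraction poset with top element `⊤`,
defining `ĝ x = ∑_{y ≤ x} (a x / a y)·|C y x| • e_y` in the free `ℚ`-vector
space on `P`, one has `∑_x ((-1)^{|E x|} / a x) • ĝ x = (1 / a ⊤) • e_⊤`. -/
theorem weighted_sum_g_hat_eq_top
    {P : Type*} [Fintype P] [PartialOrder P] [OrderTop P] [DecidableEq P]
    [DecidableRel ((· ≤ ·) : P → P → Prop)] [LocallyFiniteOrder P]
    {α : Type*} [DecidableEq α]
    (E : P → Finset α) (C : P → P → Finset (Finset α))
    (hEtop : E ⊤ = ∅)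
    (hsub : ∀ x y S, S ∈ C x y → S ⊆ E x)
    (hpart : ∀ x : P, ∀ S : Finset α, S ⊆ E x → ∃! y : P, x ≤ y ∧ S ∈ C x y)
    (hcard : ∀ x y S, x ≤ y → S ∈ C x y → (E y).card = (E x).card - S.card)
    (hCdiag : ∀ x : P, C x x = {∅})
    (hCtop : ∀ x : P, C x ⊤ = {E x})
    (a : P → ℚ) (ha : ∀ x, 0 < a x)
    (g : P → (P →₀ ℚ))
    (hg : ∀ x, g x = ∑ y ∈ Finset.univ.filter (· ≤ x),
        ((a x / a y) * ((C y x).card : ℚ)) • Finsupp.single y (1 : ℚ)) :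
    ∑ x : P, ((-1 : ℚ) ^ (E x).card / a x) • g x
      = (1 / a ⊤) • Finsupp.single (⊤ : P) (1 : ℚ) := by

  classical
  have haz : ∀ x : P, a x ≠ 0 := fun x => (ha x).ne'
  have hEempty : ∀ y : P, E y = ∅ → y = ⊤ := by
    intro y hy
    obtain ⟨z, hz, huniq⟩ := hpart y ∅ (by simp [hy])
    have h1 : y = z := huniq y ⟨le_refl y, by simp [hCdiag]⟩
    have h2 : (⊤ : P) = z := huniq ⊤ ⟨le_top, by simp [hCtop, hy]⟩
    rw [h1, ← h2]
  have key : ∀ y : P,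
      ∑ x ∈ Finset.univ.filter (y ≤ ·), ((-1:ℚ)^(E x).card * ((C y x).card : ℚ))
        = if y = ⊤ then 1 else 0 := by
    intro y
    have hbi : (E y).powerset = (Finset.univ.filter (y ≤ ·)).biUnion (fun x => C y x) := by
      ext S
      simp only [Finset.mem_powerset, Finset.mem_biUnion, Finset.mem_filter,
        Finset.mem_univ, true_and]
      constructor
      · intro hS
        obtain ⟨z, hz, _⟩ := hpart y S hS
        exact ⟨z, hz.1, hz.2⟩
      · rintro ⟨z, _, hz⟩
        exact hsub y z S hz
    have hdisj : ∀ x₁ ∈ Finset.univ.filter (y ≤ ·), ∀ x₂ ∈ Finset.univ.filter (y ≤ ·),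
        x₁ ≠ x₂ → Disjoint (C y x₁) (C y x₂) := by
      intro x₁ h1 x₂ h2 hne
      simp only [Finset.mem_filter, Finset.mem_univ, true_and] at h1 h2
      rw [Finset.disjoint_left]
      intro S hS1 hS2
      obtain ⟨z, _, huniq⟩ := hpart y S (hsub y x₁ S hS1)
      exact hne ((huniq x₁ ⟨h1, hS1⟩).trans (huniq x₂ ⟨h2, hS2⟩).symm)
    have h1 : ∑ S ∈ (E y).powerset, ((-1:ℚ)^((E y).card - S.card))
        = ∑ x ∈ Finset.univ.filter (y ≤ ·), ((-1:ℚ)^(E x).card * ((C y x).card : ℚ)) := by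
      rw [hbi, Finset.sum_biUnion hdisj]
      apply Finset.sum_congr rfl
      intro x hx
      simp only [Finset.mem_filter, Finset.mem_univ, true_and] at hx
      rw [Finset.sum_congr rfl (fun S hS => by rw [← hcard y x S hx hS])]
      simp [Finset.sum_const, mul_comm]
    have h2 : ∑ S ∈ (E y).powerset, ((-1:ℚ)^((E y).card - S.card))
        = (-1:ℚ)^(E y).card * ∑ S ∈ (E y).powerset, ((-1:ℚ)^S.card) := by
      rw [Finset.mul_sum]
      apply Finset.sum_congr rfl
      intro S hS
      rw [Finset.mem_powerset] at hS
      have hk := Finset.card_le_card hS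
      have e1 : (-1:ℚ)^((E y).card - S.card) * (-1:ℚ)^S.card = (-1:ℚ)^(E y).card := by
        rw [← pow_add]
        congr 1
        omega
      have e2 : (-1:ℚ)^S.card * (-1:ℚ)^S.card = 1 := by
        rw [← pow_add, ← two_mul, pow_mul]
        norm_num
      calc (-1:ℚ)^((E y).card - S.card)
          = (-1:ℚ)^((E y).card - S.card) * ((-1:ℚ)^S.card * (-1:ℚ)^S.card) := by
            rw [e2, mul_one]
        _ = (-1:ℚ)^(E y).card * (-1:ℚ)^S.card := by rw [← mul_assoc, e1]
    have hp : ∑ S ∈ (E y).powerset, ((-1:ℚ)^S.card) = if E y = ∅ then 1 else 0 := by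
      have h := Finset.sum_powerset_neg_one_pow_card (x := E y)
      exact_mod_cast h
    rw [← h1, h2, hp]
    by_cases hE : E y = ∅
    · have hyt := hEempty y hE
      subst hyt
      simp [hEtop]
    · have hy : y ≠ ⊤ := fun h => hE (h ▸ hEtop)
      simp [hE, hy]
  calc ∑ x : P, ((-1 : ℚ) ^ (E x).card / a x) • g x
      = ∑ x : P, ∑ y : P, (if y ≤ x then
          ((-1:ℚ)^(E x).card * ((C y x).card : ℚ) / a y) • Finsupp.single y (1:ℚ)
          else 0) := by
        apply Finset.sum_congr rfl
        intro x _
        rw [hg x, Finset.smul_sum, ← Finset.sum_filter]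
        apply Finset.sum_congr rfl
        intro y hy
        rw [smul_smul]
        congr 1
        have hx : (-1:ℚ)^(E x).card / a x * (a x / a y * ((C y x).card : ℚ))
            = (-1:ℚ)^(E x).card * ((C y x).card : ℚ) / a y * (a x / a x) := by ring
        rw [hx, div_self (haz x), mul_one]
    _ = ∑ y : P, ∑ x : P, (if y ≤ x then
          ((-1:ℚ)^(E x).card * ((C y x).card : ℚ) / a y) • Finsupp.single y (1:ℚ)
          else 0) := Finset.sum_comm
    _ = ∑ y : P, ((∑ x ∈ Finset.univ.filter (y ≤ ·),
          ((-1:ℚ)^(E x).card * ((C y x).card : ℚ))) / a y) • Finsupp.single y (1:ℚ) := by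
        apply Finset.sum_congr rfl
        intro y _
        rw [Finset.sum_div, Finset.sum_smul, Finset.sum_filter]
    _ = ∑ y : P, (if y = ⊤ then (1 / a y) • Finsupp.single y (1:ℚ) else 0) := by
        apply Finset.sum_congr rfl
        intro y _
        rw [key y]
        by_cases hy : y = ⊤ <;> simp [hy]
    _ = (1 / a ⊤) • Finsupp.single (⊤ : P) (1 : ℚ) := by
        rw [Finset.sum_ite_eq' Finset.univ (⊤ : P)]
        simp
end
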